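/- Let 0 < r < 1/2, h > 0, and let 0 = t₀ < t₁ < ⋯ < t_N = 1 be a partition of I = (0,1) into subintervals γᵢ = (tᵢ₋₁, tᵢ) each of length at most h. Let v : [0,1] → ℝ be absolutely continuous with square-integrable derivative g, choose points xᵢ ∈ γᵢ, and set w = v − v_h where v_h = ∑_{i=1}^N v(xᵢ) 1_{γᵢ} is the piecewise constant interpolant. Then the extradiagonal sum satisfies ∑_{i=1}^N ∑_{j ≠ i} ∬_{γᵢ × γⱼ} |w(y) − w(x)|² / |y − x|^{1+2r} dx dy ≤ (4/(r(1 − 2r))) · h^{2−2r} · ∫₀¹ g(t)² dt. -/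

import Mathlib

/-
On `γᵢ` we have `w x = ∫ g` from `xᵢ` to `x`, so Cauchy–Schwarz gives `w² ≤ h Gᵢ` with
`Gᵢ = ∫_{γᵢ} g²`, hence `|w y - w x|² ≤ 2h (Gᵢ + Gⱼ)` on `γᵢ × γⱼ`. For `i ≠ j` the kernel
`|y - x|^(-1-2r)` integrates over `γᵢ × γⱼ` to `Dᵢⱼ / (2r(1-2r))`, where `Dᵢⱼ` is a mixed second
difference of `|s|^(1-2r)`. For fixed `i` these telescope in `j`, and since `|s|^(1-2r)` is even and
increasing in `|s|`, the off-diagonal row sum is at most `2 |γᵢ|^(1-2r) ≤ 2 h^(1-2r)`. As `D` is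
symmetric, `∑_{i≠j} (Gᵢ + Gⱼ) Dᵢⱼ ≤ 4 h^(1-2r) ∑ Gᵢ`, and `∑ Gᵢ = ∫₀¹ g²`.
-/

open MeasureTheory Set Finset intervalIntegral
open scoped Interval

lemma sq_integral_le_measureReal_univ_mul {α : Type*} [MeasurableSpace α] {μ : Measure α}
    [IsFiniteMeasure μ] {f : α → ℝ} (hf : Integrable f μ)
    (hf2 : Integrable (fun x => f x ^ 2) μ) :
    (∫ x, f x ∂μ) ^ 2 ≤ μ.real univ * ∫ x, f x ^ 2 ∂μ := by
  rcases eq_zero_or_neZero μ with rfl | hμ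
  · simp
  have hm : 0 < μ.real univ := by simp
  have h := (even_two.convexOn_pow (𝕜 := ℝ)).map_average_le (continuousOn_pow 2)
    isClosed_univ (by simp) hf hf2
  rw [average_eq, average_eq, smul_eq_mul, smul_eq_mul, mul_pow] at h
  field_simp at h
  exact h

lemma sq_intervalIntegral_le_of_mem_Icc {g : ℝ → ℝ} {c d u x : ℝ} (hu : u ∈ Icc c d)
    (hx : x ∈ Icc c d) (hg : IntegrableOn g (Ioc c d))
    (hg2 : IntegrableOn (fun s => g s ^ 2) (Ioc c d)) :
    (∫ s in u..x, g s) ^ 2 ≤ (d - c) * ∫ s in c..d, g s ^ 2 := by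
  have hcd : c ≤ d := hu.1.trans hu.2
  have hsub : Ι u x ⊆ Ioc c d := Ioc_subset_Ioc (le_min hu.1 hx.1) (max_le hu.2 hx.2)
  have habs : |∫ s in u..x, g s| ≤ ∫ s in Ioc c d, |g s| :=
    norm_integral_le_integral_norm_uIoc.trans
      (setIntegral_mono_set hg.norm (ae_of_all _ fun _ => norm_nonneg _) hsub.eventuallyLE)
  have hcs := sq_integral_le_measureReal_univ_mul (μ := volume.restrict (Ioc c d)) hg.abs
    (by simp only [sq_abs]; exact hg2)
  calc (∫ s in u..x, g s) ^ 2 = |∫ s in u..x, g s| ^ 2 := (sq_abs _).symm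
    _ ≤ (∫ s in Ioc c d, |g s|) ^ 2 := pow_le_pow_left₀ (abs_nonneg _) habs 2
    _ ≤ _ := hcs
    _ = (d - c) * ∫ s in c..d, g s ^ 2 := by simp [hcd, integral_of_le hcd]

lemma sum_indicator_Ioc_eq_of_mem {N : ℕ} {t : ℕ → ℝ} (ht : MonotoneOn t (Set.Iic N)) {i : ℕ}
    (hi : i < N) {x : ℝ} (hx : x ∈ Ioc (t i) (t (i + 1))) (c : ℕ → ℝ) :
    ∑ k ∈ range N, (Ioc (t k) (t (k + 1))).indicator (fun _ => c k) x = c i := by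
  refine (sum_eq_single_of_mem i (mem_range.2 hi) fun k hk hki => ?_).trans
    (indicator_of_mem hx _)
  have hkN := mem_range.1 hk
  refine indicator_of_notMem (fun hxk => ?_) _
  rcases hki.lt_or_gt with hki | hik
  · have := ht (Set.mem_Iic.2 (by omega)) (Set.mem_Iic.2 hi.le) (show k + 1 ≤ i by omega)
    linarith [hx.1, hxk.2]
  · have := ht (Set.mem_Iic.2 (by omega)) (Set.mem_Iic.2 hkN.le) (show i + 1 ≤ k by omega)
    linarith [hx.2, hxk.1]

lemma Finset.sum_sum_erase_comm {ι M : Type*} [DecidableEq ι] [AddCommGroup M] (s : Finset ι)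
    (F : ι → ι → M) : ∑ i ∈ s, ∑ j ∈ s.erase i, F i j = ∑ i ∈ s, ∑ j ∈ s.erase i, F j i := by
  have hdiag : ∀ G : ι → ι → M,
      ∑ i ∈ s, ∑ j ∈ s.erase i, G i j = ∑ i ∈ s, ∑ j ∈ s, G i j - ∑ i ∈ s, G i i := fun G => by
    rw [← sum_sub_distrib]
    exact sum_congr rfl fun i hi => sum_erase_eq_sub hi
  rw [hdiag, hdiag, sum_comm]

lemma sum_sum_erase_add_mul_le {ι : Type*} [DecidableEq ι] {s : Finset ι} {G : ι → ℝ}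
    {D : ι → ι → ℝ} {M : ℝ} (hG : ∀ i ∈ s, 0 ≤ G i) (hD : ∀ i j, D j i = D i j)
    (hrow : ∀ i ∈ s, ∑ j ∈ s.erase i, D i j ≤ M) :
    ∑ i ∈ s, ∑ j ∈ s.erase i, (G i + G j) * D i j ≤ 2 * M * ∑ i ∈ s, G i := by
  calc ∑ i ∈ s, ∑ j ∈ s.erase i, (G i + G j) * D i j
      = ∑ i ∈ s, ∑ j ∈ s.erase i, G i * D i j + ∑ i ∈ s, ∑ j ∈ s.erase i, G j * D i j := by
        simp only [add_mul, sum_add_distrib]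
    _ = 2 * ∑ i ∈ s, G i * ∑ j ∈ s.erase i, D i j := by
        rw [sum_sum_erase_comm s fun i j => G j * D i j, two_mul]
        simp only [hD, mul_sum]
    _ ≤ 2 * ∑ i ∈ s, G i * M := by
        gcongr with i hi
        exacts [hG i hi, hrow i hi]
    _ = 2 * M * ∑ i ∈ s, G i := by
        rw [← sum_mul]
        ring

/-- The mixed second difference of `(x, y) ↦ φ (y - x)` over `[a, b] × [c, d]`. For
`φ = |·| ^ (1 - 2r)` and disjoint intervals it is `2r (1 - 2r)` times the integral of
`|y - x| ^ (-1 - 2r)` over the rectangle. -/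
def mixedDiff (φ : ℝ → ℝ) (a b c d : ℝ) : ℝ :=
  φ (c - a) + φ (d - b) - φ (d - a) - φ (c - b)

lemma mixedDiff_comm {φ : ℝ → ℝ} (hφ : ∀ s, φ (-s) = φ s) (a b c d : ℝ) :
    mixedDiff φ c d a b = mixedDiff φ a b c d := by
  simp only [mixedDiff, ← neg_sub c a, ← neg_sub d b, ← neg_sub d a, ← neg_sub c b, hφ]
  ring

lemma mixedDiff_neg {φ : ℝ → ℝ} (hφ : ∀ s, φ (-s) = φ s) (a b c d : ℝ) :
    mixedDiff φ (-b) (-a) (-d) (-c) = mixedDiff φ a b c d := by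
  simp only [mixedDiff, neg_sub_neg, ← neg_sub c a, ← neg_sub d b, ← neg_sub d a, ← neg_sub c b,
    hφ]
  ring

lemma sum_erase_mixedDiff_le {φ : ℝ → ℝ} (hφ : ∀ s, φ (-s) = φ s)
    (hmono : MonotoneOn φ (Ici 0)) {N : ℕ} {t : ℕ → ℝ} (ht : MonotoneOn t (Set.Iic N)) {i : ℕ}
    (hi : i < N) :
    ∑ j ∈ (range N).erase i, mixedDiff φ (t i) (t (i + 1)) (t j) (t (j + 1)) ≤
      2 * (φ (t (i + 1) - t i) - φ 0) := by
  set u : ℕ → ℝ := fun j => φ (t j - t i) - φ (t j - t (i + 1))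
  have hmem : ∀ k ≤ N, k ∈ Set.Iic N := fun k hk => Set.mem_Iic.2 hk
  have h0i := ht (hmem 0 (Nat.zero_le _)) (hmem i hi.le) (Nat.zero_le _)
  have hii := ht (hmem i hi.le) (hmem (i + 1) hi) (Nat.le_succ i)
  have hiN := ht (hmem (i + 1) hi) (hmem N le_rfl) hi
  have hu0 : u 0 ≤ 0 := by
    simp only [u, ← neg_sub (t i), ← neg_sub (t (i + 1)), hφ, sub_nonpos]
    exact hmono (mem_Ici.2 (by linarith)) (mem_Ici.2 (by linarith)) (by linarith)
  have huN : 0 ≤ u N := by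
    simp only [u, sub_nonneg]
    exact hmono (mem_Ici.2 (by linarith)) (mem_Ici.2 (by linarith)) (by linarith)
  have hdiag : mixedDiff φ (t i) (t (i + 1)) (t i) (t (i + 1)) =
      2 * (φ 0 - φ (t (i + 1) - t i)) := by
    simp only [mixedDiff, sub_self, ← neg_sub (t (i + 1)) (t i), hφ]
    ring
  have hsum : ∑ j ∈ range N, mixedDiff φ (t i) (t (i + 1)) (t j) (t (j + 1)) = u 0 - u N := by
    rw [← sum_range_sub']
    refine sum_congr rfl fun j _ => ?_
    simp only [mixedDiff, u]
    ring
  rw [sum_erase_eq_sub (mem_range.2 hi), hsum, hdiag]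
  linarith

lemma sum_erase_mixedDiff_abs_rpow_le {p h : ℝ} (hp : 0 < p) {N : ℕ} {t : ℕ → ℝ}
    (ht : MonotoneOn t (Set.Iic N)) (hlen : ∀ i < N, t (i + 1) - t i ≤ h) {i : ℕ} (hi : i < N) :
    ∑ j ∈ (range N).erase i, mixedDiff (fun s => |s| ^ p) (t i) (t (i + 1)) (t j) (t (j + 1)) ≤
      2 * h ^ p := by
  have hmono : MonotoneOn (fun s : ℝ => |s| ^ p) (Ici 0) := fun x hx y hy hxy => by
    simp only [abs_of_nonneg (mem_Ici.1 hx), abs_of_nonneg (mem_Ici.1 hy)]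
    exact Real.rpow_le_rpow hx hxy hp.le
  have hstep : 0 ≤ t (i + 1) - t i :=
    sub_nonneg.2 (ht (Set.mem_Iic.2 hi.le) (Set.mem_Iic.2 hi) (Nat.le_succ i))
  refine (sum_erase_mixedDiff_le (fun s => by rw [abs_neg]) hmono ht hi).trans ?_
  simp only [abs_zero, Real.zero_rpow hp.ne', sub_zero, abs_of_nonneg hstep]
  exact mul_le_mul_of_nonneg_left (Real.rpow_le_rpow hstep (hlen i hi) hp.le) zero_le_two

lemma intervalIntegral.integral_mono_of_nonneg_on_Ioo {f g : ℝ → ℝ} {a b : ℝ} (hab : a ≤ b)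
    (hg : IntervalIntegrable g volume a b) (hf : ∀ x ∈ Ioo a b, 0 ≤ f x)
    (hfg : ∀ x ∈ Ioo a b, f x ≤ g x) : ∫ x in a..b, f x ≤ ∫ x in a..b, g x := by
  rw [integral_of_le hab, integral_of_le hab, ← Measure.restrict_congr_set Ioo_ae_eq_Ioc]
  exact integral_mono_of_nonneg (ae_restrict_of_forall_mem measurableSet_Ioo hf)
    (hg.1.mono_set Ioo_subset_Ioc_self) (ae_restrict_of_forall_mem measurableSet_Ioo hfg)

lemma intervalIntegrable_const_sub_rpow {q : ℝ} (hq : -1 < q) (a b c : ℝ) :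
    IntervalIntegrable (fun x => (c - x) ^ q) volume a b := by
  simpa using (intervalIntegrable_rpow' hq (a := c - a) (b := c - b)).comp_sub_left c

lemma integral_const_sub_rpow {q : ℝ} (hq : -1 < q) (a b c : ℝ) :
    ∫ x in a..b, (c - x) ^ q = ((c - a) ^ (q + 1) - (c - b) ^ (q + 1)) / (q + 1) := by
  rw [integral_comp_sub_left (fun x => x ^ q), integral_rpow (Or.inl hq)]

lemma integral_sub_const_rpow {q : ℝ} (hq : q ≠ -1) {c d x : ℝ} (hx : x ∉ [[c, d]]) :
    ∫ y in c..d, (y - x) ^ q = ((d - x) ^ (q + 1) - (c - x) ^ (q + 1)) / (q + 1) := by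
  rw [integral_comp_sub_right (fun y => y ^ q), integral_rpow (Or.inr ⟨hq, ?_⟩)]
  rwa [← sub_self x, ← image_sub_const_uIcc, sub_left_injective.mem_set_image]

lemma integral_integral_div_abs_sub_rpow_le_of_le {r a b c d C : ℝ} (hr0 : 0 < r)
    (hr : r < 1 / 2) (hab : a ≤ b) (hbc : b ≤ c) (hcd : c ≤ d) {f : ℝ → ℝ → ℝ}
    (hf0 : ∀ x y, 0 ≤ f x y) (hfC : ∀ x ∈ Ioo a b, ∀ y ∈ Ioo c d, f x y ≤ C) :
    ∫ x in a..b, ∫ y in c..d, f x y / |y - x| ^ (1 + 2 * r) ≤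
      C / (2 * r * (1 - 2 * r)) * mixedDiff (fun s => |s| ^ (1 - 2 * r)) a b c d := by
  have hq : -1 < -(2 * r) := by linarith
  set Ψ : ℝ → ℝ := fun x => C * ((c - x) ^ (-(2 * r)) - (d - x) ^ (-(2 * r))) / (2 * r)
  have hinner : ∀ x ∈ Ioo a b, ∫ y in c..d, f x y / |y - x| ^ (1 + 2 * r) ≤ Ψ x := by
    intro x hx
    have hxc : x < c := hx.2.trans_le hbc
    have hx' : x ∉ [[c, d]] := notMem_uIcc_of_lt hxc (hxc.trans_le hcd)
    have hint : IntervalIntegrable (fun y => C * (y - x) ^ (-(1 + 2 * r))) volume c d :=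
      ((continuousOn_id.sub continuousOn_const).rpow_const fun y hy =>
        Or.inl (sub_ne_zero.2 (ne_of_mem_of_not_mem hy hx'))).intervalIntegrable.const_mul C
    calc ∫ y in c..d, f x y / |y - x| ^ (1 + 2 * r)
        ≤ ∫ y in c..d, C * (y - x) ^ (-(1 + 2 * r)) :=
          integral_mono_of_nonneg_on_Ioo hcd hint
            (fun y _ => div_nonneg (hf0 x y) (by positivity)) fun y hy => by
              have hyx : 0 < y - x := by linarith [hy.1]
              rw [abs_of_pos hyx, Real.rpow_neg hyx.le, div_eq_mul_inv]
              exact mul_le_mul_of_nonneg_right (hfC x hx y hy) (by positivity)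
      _ = Ψ x := by
          rw [intervalIntegral.integral_const_mul, integral_sub_const_rpow (by linarith) hx']
          simp only [Ψ]
          field_simp
          ring_nf
  have hΨ : IntervalIntegrable Ψ volume a b :=
    (((intervalIntegrable_const_sub_rpow hq a b c).sub
      (intervalIntegrable_const_sub_rpow hq a b d)).const_mul C).div_const _
  calc ∫ x in a..b, ∫ y in c..d, f x y / |y - x| ^ (1 + 2 * r)
      ≤ ∫ x in a..b, Ψ x :=
        integral_mono_of_nonneg_on_Ioo hab hΨ
          (fun x _ => integral_nonneg hcd fun y _ => div_nonneg (hf0 x y) (by positivity)) hinner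
    _ = _ := by
        rw [intervalIntegral.integral_div, intervalIntegral.integral_const_mul,
          integral_sub (intervalIntegrable_const_sub_rpow hq a b c)
            (intervalIntegrable_const_sub_rpow hq a b d),
          integral_const_sub_rpow hq, integral_const_sub_rpow hq, neg_add_eq_sub]
        simp only [mixedDiff]
        rw [abs_of_nonneg (by linarith : 0 ≤ c - a), abs_of_nonneg (by linarith : 0 ≤ d - b),
          abs_of_nonneg (by linarith : 0 ≤ d - a), abs_of_nonneg (by linarith : 0 ≤ c - b)]
        have : 1 - 2 * r ≠ 0 := by linarith
        field_simp
        ring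

lemma integral_integral_div_abs_sub_rpow_le {r a b c d C : ℝ} (hr0 : 0 < r)
    (hr : r < 1 / 2) (hab : a ≤ b) (hcd : c ≤ d) (hdisj : b ≤ c ∨ d ≤ a) {f : ℝ → ℝ → ℝ}
    (hf0 : ∀ x y, 0 ≤ f x y) (hfC : ∀ x ∈ Ioo a b, ∀ y ∈ Ioo c d, f x y ≤ C) :
    ∫ x in a..b, ∫ y in c..d, f x y / |y - x| ^ (1 + 2 * r) ≤
      C / (2 * r * (1 - 2 * r)) * mixedDiff (fun s => |s| ^ (1 - 2 * r)) a b c d := by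
  rcases hdisj with hbc | hda
  · exact integral_integral_div_abs_sub_rpow_le_of_le hr0 hr hab hbc hcd hf0 hfC
  have hreflect := integral_integral_div_abs_sub_rpow_le_of_le hr0 hr (neg_le_neg hab)
    (neg_le_neg hda) (neg_le_neg hcd) (f := fun x y => f (-x) (-y)) (fun x y => hf0 _ _)
    fun x hx y hy => hfC _ ⟨by linarith [hx.2], by linarith [hx.1]⟩ _
      ⟨by linarith [hy.2], by linarith [hy.1]⟩
  rw [mixedDiff_neg (fun s => by rw [abs_neg])] at hreflect
  convert hreflect using 1
  conv_rhs => rw [← integral_comp_neg]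
  congr 1 with x
  rw [← integral_comp_neg]
  simp only [neg_neg, neg_sub_neg, abs_sub_comm]

lemma extradiagonal_sum_le_of_sq_le {r h : ℝ} (hr0 : 0 < r) (hr : r < 1 / 2) {N : ℕ}
    {t : ℕ → ℝ} (hmono : ∀ i < N, t i < t (i + 1)) (hlen : ∀ i < N, t (i + 1) - t i ≤ h)
    {F : ℝ → ℝ} {B : ℕ → ℝ} (hF : ∀ i < N, ∀ x ∈ Ioc (t i) (t (i + 1)), F x ^ 2 ≤ B i) :
    ∑ i ∈ range N, ∑ j ∈ (range N).erase i,
        ∫ x in t i..t (i + 1), ∫ y in t j..t (j + 1), |F y - F x| ^ 2 / |y - x| ^ (1 + 2 * r) ≤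
      4 / (r * (1 - 2 * r)) * h ^ (1 - 2 * r) * ∑ i ∈ range N, B i := by
  have ht : MonotoneOn t (Set.Iic N) := (strictMonoOn_Iic_of_lt_succ hmono).monotoneOn
  set D : ℕ → ℕ → ℝ := fun i j =>
    mixedDiff (fun s => |s| ^ (1 - 2 * r)) (t i) (t (i + 1)) (t j) (t (j + 1)) with hD
  have hB : ∀ i ∈ range N, 0 ≤ B i := fun i hi =>
    (sq_nonneg _).trans (hF i (mem_range.1 hi) _ ⟨hmono i (mem_range.1 hi), le_rfl⟩)
  have hpair : ∀ i ∈ range N, ∀ j ∈ (range N).erase i,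
      ∫ x in t i..t (i + 1), ∫ y in t j..t (j + 1), |F y - F x| ^ 2 / |y - x| ^ (1 + 2 * r) ≤
        1 / (r * (1 - 2 * r)) * ((B i + B j) * D i j) := by
    intro i hi j hj
    obtain ⟨hji, hj⟩ := mem_erase.1 hj
    rw [Finset.mem_range] at hi hj
    have hdisj : t (i + 1) ≤ t j ∨ t (j + 1) ≤ t i := by
      rcases hji.lt_or_gt with hlt | hgt
      · exact Or.inr (ht (Set.mem_Iic.2 (by omega)) (Set.mem_Iic.2 (by omega)) hlt)
      · exact Or.inl (ht (Set.mem_Iic.2 (by omega)) (Set.mem_Iic.2 (by omega)) hgt)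
    convert integral_integral_div_abs_sub_rpow_le (f := fun x y => |F y - F x| ^ 2)
      (C := 2 * (B i + B j)) hr0 hr (hmono i hi).le (hmono j hj).le hdisj
      (fun _ _ => sq_nonneg _) (fun x hx y hy => by
        nlinarith [hF i hi x (Ioo_subset_Ioc_self hx), hF j hj y (Ioo_subset_Ioc_self hy),
          sq_abs (F y - F x), sq_nonneg (F x + F y)]) using 1
    simp only [hD]
    field_simp
  have hsym : ∀ i j, D j i = D i j := fun i j => mixedDiff_comm (fun s => by rw [abs_neg]) _ _ _ _
  have hrow : ∀ i ∈ range N, ∑ j ∈ (range N).erase i, D i j ≤ 2 * h ^ (1 - 2 * r) :=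
    fun i hi => sum_erase_mixedDiff_abs_rpow_le (by linarith) ht hlen (mem_range.1 hi)
  have h2r : 0 < 1 - 2 * r := by linarith
  calc ∑ i ∈ range N, ∑ j ∈ (range N).erase i,
        ∫ x in t i..t (i + 1), ∫ y in t j..t (j + 1), |F y - F x| ^ 2 / |y - x| ^ (1 + 2 * r)
      ≤ ∑ i ∈ range N, ∑ j ∈ (range N).erase i, 1 / (r * (1 - 2 * r)) * ((B i + B j) * D i j) :=
        sum_le_sum fun i hi => sum_le_sum (hpair i hi)
    _ = 1 / (r * (1 - 2 * r)) * ∑ i ∈ range N, ∑ j ∈ (range N).erase i, (B i + B j) * D i j := by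
        simp only [mul_sum]
    _ ≤ 1 / (r * (1 - 2 * r)) * (2 * (2 * h ^ (1 - 2 * r)) * ∑ i ∈ range N, B i) := by
        gcongr
        exact sum_sum_erase_add_mul_le hB hsym hrow
    _ = 4 / (r * (1 - 2 * r)) * h ^ (1 - 2 * r) * ∑ i ∈ range N, B i := by
        ring

/-- Extradiagonal terms bound in Lemma 1: with `w = v - v_h`, where
`v_h = ∑ᵢ v(xᵢ) 1_{γᵢ}` is the piecewise constant interpolant of `v`
on a partition of `(0,1)` into subintervals of length at most `h`,
`∑ᵢ ∑_{j≠i} ∬_{γᵢ×γⱼ} |w y - w x|² / |y - x|^(1+2r)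
  ≤ (4/(r(1-2r))) h^(2-2r) ∫₀¹ g²`. -/
theorem extradiagonal_terms_bound (r h : ℝ) (hr0 : 0 < r) (hr : r < 1 / 2) (hh : 0 < h)
    (N : ℕ) (t : ℕ → ℝ) (ht0 : t 0 = 0) (htN : t N = 1)
    (hmono : ∀ i < N, t i < t (i + 1))
    (hlen : ∀ i < N, t (i + 1) - t i ≤ h)
    (v g : ℝ → ℝ)
    (hg_int : IntegrableOn g (Icc (0:ℝ) 1))
    (hg_sq : IntegrableOn (fun s => g s ^ 2) (Icc (0:ℝ) 1))
    (hv : ∀ p ∈ Icc (0:ℝ) 1, ∀ q ∈ Icc (0:ℝ) 1, v q - v p = ∫ s in p..q, g s)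
    (xp : ℕ → ℝ) (hxp : ∀ i < N, xp i ∈ Ioc (t i) (t (i + 1)))
    (w : ℝ → ℝ)
    (hw : ∀ y, w y = v y -
      ∑ i ∈ Finset.range N, Set.indicator (Ioc (t i) (t (i + 1))) (fun _ => v (xp i)) y) :
    ∑ i ∈ Finset.range N, ∑ j ∈ (Finset.range N).erase i,
        ∫ x in t i..t (i + 1), ∫ y in t j..t (j + 1),
          |w y - w x| ^ 2 / |y - x| ^ (1 + 2 * r) ≤
      (4 / (r * (1 - 2 * r))) * h ^ (2 - 2 * r) * ∫ s in (0:ℝ)..1, g s ^ 2 := by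
  have ht : MonotoneOn t (Set.Iic N) := (strictMonoOn_Iic_of_lt_succ hmono).monotoneOn
  have hsub : ∀ i < N, Icc (t i) (t (i + 1)) ⊆ Icc 0 1 := fun i hi =>
    Icc_subset_Icc (ht0 ▸ ht (Set.mem_Iic.2 N.zero_le) (Set.mem_Iic.2 hi.le) i.zero_le)
      (htN ▸ ht (Set.mem_Iic.2 hi) (Set.mem_Iic.2 le_rfl) hi)
  set G : ℕ → ℝ := fun i => ∫ s in t i..t (i + 1), g s ^ 2
  have hw_sq : ∀ i < N, ∀ x ∈ Ioc (t i) (t (i + 1)), w x ^ 2 ≤ h * G i := by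
    intro i hi x hx
    have hu := Ioc_subset_Icc_self (hxp i hi)
    have hG : 0 ≤ G i := integral_nonneg (hmono i hi).le fun s _ => sq_nonneg _
    rw [hw, sum_indicator_Ioc_eq_of_mem ht hi hx,
      hv _ (hsub i hi hu) _ (hsub i hi (Ioc_subset_Icc_self hx))]
    exact (sq_intervalIntegral_le_of_mem_Icc hu (Ioc_subset_Icc_self hx)
      (hg_int.mono_set (Ioc_subset_Icc_self.trans (hsub i hi)))
      (hg_sq.mono_set (Ioc_subset_Icc_self.trans (hsub i hi)))).trans
      (mul_le_mul_of_nonneg_right (hlen i hi) hG)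
  have hsum : ∑ i ∈ range N, G i = ∫ s in (0 : ℝ)..1, g s ^ 2 := by
    have hadj := sum_integral_adjacent_intervals fun k hk =>
      (intervalIntegrable_iff_integrableOn_Icc_of_le (hmono k hk).le).2 (hg_sq.mono_set (hsub k hk))
    rwa [ht0, htN] at hadj
  calc _ ≤ 4 / (r * (1 - 2 * r)) * h ^ (1 - 2 * r) * ∑ i ∈ range N, h * G i :=
        extradiagonal_sum_le_of_sq_le hr0 hr hmono hlen hw_sq
    _ = (4 / (r * (1 - 2 * r))) * h ^ (2 - 2 * r) * ∫ s in (0 : ℝ)..1, g s ^ 2 := by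
        rw [← mul_sum, hsum, show 2 - 2 * r = 1 + (1 - 2 * r) by ring, Real.rpow_add hh,
          Real.rpow_one]
        ring
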